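/- arXiv:1309.4194 — 4 statements merged into one kernel-verified Lean document; each statement's English description precedes it below -/
import Mathlib

section
/- Let r ≥ 1 be an integer, let ν be a rational number with 0 ≤ ν < 1/e, and let μ be a real number with μ > e·r/(p−1). If f ∈ 𝔖_ν and g ∈ 𝔖_{1/μ} satisfy E(u)^r·f = φ(g), then f ∈ 𝔖_{1/(p·μ − e·r)}; that is, writing f = Σ_{i≥0} a_i u^i, one has val(a_i) + i/(p·μ − e·r) ≥ 0 for all i. -/
noncomputable section

open PowerSeries

variable (p : ℕ) [hp : Fact p.Prime] (k : Type) [Field k] [CharP k p] [PerfectRing k p]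

/-- `K₀`, the fraction field of the ring of Witt vectors `W(k)`. -/
abbrev K₀ : Type := FractionRing (WittVector p k)

/-- The inclusion `O_{K₀} = W(k) → K₀`. -/
def ι : WittVector p k →+* K₀ p k := algebraMap _ _

/-- `valGE c a` says `val a ≥ c`, for the valuation `val` on `K₀` normalized by `val p = 1`
(whose ring of integers is `W(k)`). -/
def valGE (c : ℝ) (a : K₀ p k) : Prop :=
  ∃ w : WittVector p k, a = (p : K₀ p k) ^ ⌈c⌉ * ι p k w

/-- Membership in `𝔖_ν`: all coefficients satisfy `val (a i) + ν·i ≥ 0`. -/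
def memS (ν : ℝ) (f : PowerSeries (K₀ p k)) : Prop :=
  ∀ i : ℕ, valGE p k (-(ν * i)) (PowerSeries.coeff i f)

/-- Membership in `ℰ⁺_ν = 𝔖_ν[1/p]`. -/
def memE (ν : ℝ) (f : PowerSeries (K₀ p k)) : Prop :=
  ∃ n : ℕ, memS p k ν (PowerSeries.C ((p : K₀ p k) ^ n) * f)

/-- The Frobenius `σ` on `K₀`, extending the Witt vector Frobenius. -/
def σ : K₀ p k →+* K₀ p k :=
  IsFractionRing.lift (g := (ι p k).comp (WittVector.frobeniusEquiv p k).toRingHom)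
    (by rw [RingHom.coe_comp]
        exact (IsFractionRing.injective (WittVector p k) (K₀ p k)).comp
          (WittVector.frobeniusEquiv p k).injective)

/-- The Frobenius `φ` on `K₀[[u]]`: `Σ a_i u^i ↦ Σ σ(a_i) u^{p·i}`. -/
def φps (f : PowerSeries (K₀ p k)) : PowerSeries (K₀ p k) :=
  PowerSeries.mk fun i => if p ∣ i then σ p k (PowerSeries.coeff (i / p) f) else 0

/-- `E(u)` regarded as a power series over `K₀`. -/
def ES (E : Polynomial (WittVector p k)) : PowerSeries (K₀ p k) :=
  ((E.map (ι p k) : Polynomial (K₀ p k)) : PowerSeries (K₀ p k))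

end

/-! ### Auxiliary development -/

open PowerSeries

section vgeSection

variable (p : ℕ) [hp : Fact p.Prime] (k : Type) [Field k] [CharP k p] [PerfectRing k p]

/-- Integer-valued version of `valGE`. -/
def vge (n : ℤ) (a : K₀ p k) : Prop :=
  ∃ w : WittVector p k, a = (p : K₀ p k) ^ n * ι p k w

theorem valGE_eq_vge (c : ℝ) (a : K₀ p k) : valGE p k c a ↔ vge p k ⌈c⌉ a := Iff.rfl

theorem pK0_ne_zero : (p : K₀ p k) ≠ 0 := WittVector.FractionRing.p_nonzero p k

theorem iota_nat_pow_mul (t : ℕ) (w : WittVector p k) :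
    (p : K₀ p k) ^ (t : ℤ) * ι p k w = ι p k ((p : WittVector p k) ^ t * w) := by
  rw [map_mul, map_pow, map_natCast, zpow_natCast]

theorem vge_zero (n : ℤ) : vge p k n 0 :=
  ⟨0, by rw [map_zero, mul_zero]⟩

theorem vge_mono {m n : ℤ} (h : m ≤ n) {a : K₀ p k} (ha : vge p k n a) : vge p k m a := by
  obtain ⟨w, rfl⟩ := ha
  refine ⟨(p : WittVector p k) ^ (n - m).toNat * w, ?_⟩
  rw [← iota_nat_pow_mul, ← mul_assoc, ← zpow_add₀ (pK0_ne_zero p k),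
    Int.toNat_of_nonneg (sub_nonneg.2 h)]
  congr 2
  omega

theorem vge_add {n : ℤ} {a b : K₀ p k} (ha : vge p k n a) (hb : vge p k n b) :
    vge p k n (a + b) := by
  obtain ⟨w, rfl⟩ := ha
  obtain ⟨v, rfl⟩ := hb
  exact ⟨w + v, by rw [map_add, mul_add]⟩

theorem vge_neg {n : ℤ} {a : K₀ p k} (ha : vge p k n a) : vge p k n (-a) := by
  obtain ⟨w, rfl⟩ := ha
  exact ⟨-w, by rw [map_neg, mul_neg]⟩

theorem vge_sub {n : ℤ} {a b : K₀ p k} (ha : vge p k n a) (hb : vge p k n b) :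
    vge p k n (a - b) := by
  rw [sub_eq_add_neg]; exact vge_add p k ha (vge_neg p k hb)

theorem vge_mul {m n : ℤ} {a b : K₀ p k} (ha : vge p k m a) (hb : vge p k n b) :
    vge p k (m + n) (a * b) := by
  obtain ⟨w, rfl⟩ := ha
  obtain ⟨v, rfl⟩ := hb
  refine ⟨w * v, ?_⟩
  rw [map_mul, zpow_add₀ (pK0_ne_zero p k)]
  ring

theorem vge_sum {n : ℤ} {β : Type*} (s : Finset β) (F : β → K₀ p k)
    (h : ∀ x ∈ s, vge p k n (F x)) : vge p k n (∑ x ∈ s, F x) :=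
  Finset.sum_induction F (vge p k n) (fun _ _ => vge_add p k) (vge_zero p k n) h

theorem sigma_iota (w : WittVector p k) :
    σ p k (ι p k w) = ι p k (WittVector.frobeniusEquiv p k w) := by
  simp [σ, ι, IsFractionRing.lift_algebraMap]

theorem vge_sigma {n : ℤ} {a : K₀ p k} (ha : vge p k n a) : vge p k n (σ p k a) := by
  obtain ⟨w, rfl⟩ := ha
  refine ⟨WittVector.frobeniusEquiv p k w, ?_⟩
  rw [map_mul, map_zpow₀, map_natCast, sigma_iota]

end vgeSection

theorem pow_dvd_coeff_pow {R : Type*} [CommRing R] (p e r : ℕ) (he : 1 ≤ e)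
    (E : Polynomial R) (hmonic : E.Monic) (hdeg : E.natDegree = e)
    (hco : ∀ j < e, ∃ c, E.coeff j = p * c) (j : ℕ) :
    (p : R) ^ (r - j / e) ∣ (E ^ r).coeff j := by
  classical
  set cf : ℕ → R := fun j => if h : j < e then (hco j h).choose else 0 with hcf
  set F : Polynomial R := ∑ m ∈ Finset.range e, Polynomial.C (cf m) * Polynomial.X ^ m with hF
  have hFco : ∀ m, F.coeff m = if m < e then cf m else 0 := by
    intro m
    rw [hF, Polynomial.finset_sum_coeff]
    simp only [Polynomial.coeff_C_mul, Polynomial.coeff_X_pow, mul_ite, mul_one, mul_zero]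
    by_cases h : m < e
    · rw [Finset.sum_eq_single m]
      · simp [h]
      · intro b _ hb; simp [Ne.symm hb]
      · intro hm; exact absurd (Finset.mem_range.2 h) hm
    · rw [if_neg h, Finset.sum_eq_zero]
      intro b hb
      rw [if_neg]
      intro hmb; rw [hmb] at h; exact h (Finset.mem_range.1 hb)
  have hEF : E = (p : Polynomial R) * F + Polynomial.X ^ e := by
    ext n
    simp only [Polynomial.coeff_add, Polynomial.coeff_X_pow]
    rcases lt_trichotomy n e with h | h | h
    · rw [(hco n h).choose_spec, if_neg (by omega)]
      have hCn : ((p : Polynomial R) * F).coeff n = (p : R) * F.coeff n := by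
        rw [← Polynomial.C_eq_natCast, Polynomial.coeff_C_mul]
      rw [hCn, hFco, if_pos h, add_zero, hcf]
      simp [h]
    · subst h
      have h1 : E.coeff n = 1 := by
        have := hmonic.coeff_natDegree; rwa [hdeg] at this
      have hCn : ((p : Polynomial R) * F).coeff n = (p : R) * F.coeff n := by
        rw [← Polynomial.C_eq_natCast, Polynomial.coeff_C_mul]
      rw [h1, hCn, hFco, if_neg (lt_irrefl _), if_pos rfl, mul_zero, zero_add]
    · rw [Polynomial.coeff_eq_zero_of_natDegree_lt (by omega), if_neg (by omega)]
      have hCn : ((p : Polynomial R) * F).coeff n = (p : R) * F.coeff n := by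
        rw [← Polynomial.C_eq_natCast, Polynomial.coeff_C_mul]
      rw [hCn, hFco, if_neg (by omega), mul_zero, add_zero]
  rw [hEF, add_pow]
  rw [Polynomial.finset_sum_coeff]
  apply Finset.dvd_sum
  intro m _
  have hterm : ((p : Polynomial R) * F) ^ m * (Polynomial.X ^ e) ^ (r - m)
        * (Polynomial.C ((r.choose m : R))) =
      ((p : Polynomial R) ^ m * (F ^ m * Polynomial.C ((r.choose m : R))))
        * Polynomial.X ^ (e * (r - m)) := by
    rw [← pow_mul]; ring
  have hterm' : ((p : Polynomial R) * F) ^ m * (Polynomial.X ^ e) ^ (r - m)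
        * ((r.choose m : Polynomial R)) =
      ((p : Polynomial R) ^ m * (F ^ m * Polynomial.C ((r.choose m : R))))
        * Polynomial.X ^ (e * (r - m)) := by
    rw [← hterm, Polynomial.C_eq_natCast]
  rw [hterm', Polynomial.coeff_mul_X_pow']
  by_cases hle : e * (r - m) ≤ j
  · rw [if_pos hle]
    have h2 : r - m ≤ j / e := by
      rw [Nat.le_div_iff_mul_le (by omega), mul_comm]; exact le_of_not_gt (by omega)
    have h3 : r - j / e ≤ m := by omega
    have hCc : ((p : Polynomial R) ^ m * (F ^ m * Polynomial.C ((r.choose m : R)))).coeff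
          (j - e * (r - m)) =
        (p : R) ^ m * ((F ^ m * Polynomial.C ((r.choose m : R))).coeff (j - e * (r - m))) := by
      rw [← Polynomial.C_eq_natCast, ← Polynomial.C_pow, Polynomial.coeff_C_mul]
    rw [hCc]
    exact Dvd.dvd.mul_right (pow_dvd_pow _ h3) _
  · rw [if_neg hle]; exact dvd_zero _

/-- The set of path bounds. -/
def pathSet (p e r : ℕ) (μ : ℝ) (i : ℕ) : Set ℤ :=
  {x | ∃ Δ : ℕ, p ∣ (i + Δ + e * r) ∧
    x = ⌈(Δ : ℝ) / e⌉ - ⌊(((i + Δ + e * r) / p : ℕ) : ℝ) / μ⌋}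

/-- The limiting lower bound for valuations of coefficients of `f`. -/
noncomputable def Gf (p e r : ℕ) (μ : ℝ) (i : ℕ) : ℤ := sInf (pathSet p e r μ i)

section arith
variable (p e r : ℕ) (μ : ℝ) (i : ℕ)
variable (hp : 1 ≤ p) (he : 1 ≤ e) (hμ0 : 0 < μ)
variable (hpμe : (e : ℝ) ≤ p * μ) (hpμer : ((e : ℝ) * r) < p * μ)

include hp in
theorem pathSet_nonempty : (pathSet p e r μ i).Nonempty := by
  obtain ⟨p', rfl⟩ : ∃ p', p = p' + 1 := ⟨p - 1, by omega⟩
  refine ⟨_, (i + e * r) * p', ⟨i + e * r, by ring⟩, rfl⟩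

include hp he hμ0 hpμe in
theorem pathSet_bddBelow : BddBelow (pathSet p e r μ i) := by
  refine ⟨-(i + e * r : ℕ), fun x hx => ?_⟩
  obtain ⟨Δ, hdvd, rfl⟩ := hx
  set m : ℕ := (i + Δ + e * r) / p with hm
  have hmp : (m : ℝ) * p = (i : ℝ) + Δ + e * r := by
    have := congrArg (Nat.cast : ℕ → ℝ) (Nat.div_mul_cancel hdvd)
    push_cast at this ⊢
    linarith [this]
  have hpμ1 : (1 : ℝ) ≤ p * μ := le_trans (by exact_mod_cast he) hpμe
  have hpμ0 : (0 : ℝ) < p * μ := lt_of_lt_of_le zero_lt_one hpμ1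
  have he0 : (0 : ℝ) < e := by exact_mod_cast he
  have hp0 : (0 : ℝ) < p := by exact_mod_cast hp
  have hmdiv : (m : ℝ) / μ = ((i : ℝ) + Δ + e * r) / (p * μ) := by
    rw [← hmp]; field_simp
  have h1 : (m : ℝ) / μ ≤ ((i : ℝ) + e * r) + (Δ : ℝ) / e := by
    rw [hmdiv]
    have hsplit : ((i : ℝ) + Δ + e * r) / (p * μ) =
        ((i : ℝ) + e * r) / (p * μ) + (Δ : ℝ) / (p * μ) := by ring
    rw [hsplit]
    have hb1 : ((i : ℝ) + e * r) / (p * μ) ≤ (i : ℝ) + e * r :=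
      div_le_self (by positivity) hpμ1
    have hb2 : (Δ : ℝ) / (p * μ) ≤ (Δ : ℝ) / e :=
      div_le_div_of_nonneg_left (by positivity) he0 hpμe
    linarith
  have h5 : (⌊(m : ℝ) / μ⌋ : ℝ) ≤ ((i : ℝ) + e * r) + (Δ : ℝ) / e := le_trans (Int.floor_le _) h1
  have h6 : ((Δ : ℝ) / e) ≤ (⌈(Δ : ℝ) / e⌉ : ℝ) := Int.le_ceil _
  have hcast : ((-(i + e * r : ℕ) : ℤ) : ℝ) ≤ ((⌈(Δ : ℝ) / e⌉ - ⌊(m : ℝ) / μ⌋ : ℤ) : ℝ) := by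
    push_cast
    linarith
  exact_mod_cast hcast

include hp he hμ0 hpμe in
theorem Gf_le_base (hdvd : p ∣ i + e * r) :
    Gf p e r μ i ≤ -⌊(((i + e * r) / p : ℕ) : ℝ) / μ⌋ := by
  apply csInf_le (pathSet_bddBelow p e r μ i hp he hμ0 hpμe)
  exact ⟨0, by simpa using hdvd, by simp⟩

include hp he hμ0 hpμe in
theorem Gf_step (d : ℕ) : Gf p e r μ i ≤ ⌈(d : ℝ) / e⌉ + Gf p e r μ (i + d) := by
  have hmem := Int.csInf_mem (pathSet_nonempty p e r μ (i + d) hp)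
    (pathSet_bddBelow p e r μ (i + d) hp he hμ0 hpμe)
  obtain ⟨Δ, hdvd, hval⟩ := hmem
  have hle : Gf p e r μ i ≤
      ⌈((d + Δ : ℕ) : ℝ) / e⌉ - ⌊(((i + (d + Δ) + e * r) / p : ℕ) : ℝ) / μ⌋ := by
    apply csInf_le (pathSet_bddBelow p e r μ i hp he hμ0 hpμe)
    exact ⟨d + Δ, by rwa [show i + (d + Δ) + e * r = i + d + Δ + e * r by ring], rfl⟩
  have hceil : ⌈((d + Δ : ℕ) : ℝ) / e⌉ ≤ ⌈(d : ℝ) / e⌉ + ⌈(Δ : ℝ) / e⌉ := by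
    push_cast
    rw [add_div]
    exact Int.ceil_add_le _ _
  rw [show i + (d + Δ) + e * r = i + d + Δ + e * r by ring] at hle
  have hGid : Gf p e r μ (i + d) =
      ⌈(Δ : ℝ) / e⌉ - ⌊(((i + d + Δ + e * r) / p : ℕ) : ℝ) / μ⌋ := hval
  omega

include hp he hμ0 hpμe hpμer in
theorem Gf_ge : -⌊(i : ℝ) / (p * μ - e * r)⌋ ≤ Gf p e r μ i := by
  apply le_csInf (pathSet_nonempty p e r μ i hp)
  rintro x ⟨Δ, hdvd, rfl⟩
  set m : ℕ := (i + Δ + e * r) / p with hm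
  set A : ℤ := ⌈(Δ : ℝ) / e⌉ with hA
  set B : ℤ := ⌊(i : ℝ) / (p * μ - e * r)⌋ with hB
  have he0 : (0 : ℝ) < e := by exact_mod_cast he
  have hpμ0 : (0 : ℝ) < p * μ := lt_of_le_of_lt (by positivity) hpμer
  have hw0 : (0 : ℝ) < p * μ - e * r := by linarith
  have hA0 : 0 ≤ A := Int.ceil_nonneg (by positivity)
  have hB0 : 0 ≤ B := Int.floor_nonneg.2 (by positivity)
  have hΔA : (Δ : ℝ) ≤ e * A := by
    have := Int.le_ceil ((Δ : ℝ) / e)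
    rw [div_le_iff₀ he0] at this
    rw [← hA] at this
    linarith [this]
  have hiB : (i : ℝ) < ((B : ℝ) + 1) * (p * μ - e * r) := by
    have h := Int.lt_floor_add_one ((i : ℝ) / (p * μ - e * r))
    rw [div_lt_iff₀ hw0] at h
    rw [← hB] at h
    linarith
  have hmp : (m : ℝ) * p = (i : ℝ) + Δ + e * r := by
    have := congrArg (Nat.cast : ℕ → ℝ) (Nat.div_mul_cancel hdvd)
    push_cast at this ⊢
    linarith [this]
  have hp0 : (0 : ℝ) < p := by exact_mod_cast hp
  have key : (i : ℝ) + Δ + e * r < ((A + B + 1 : ℤ) : ℝ) * (p * μ) := by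
    push_cast
    have h1 : (e : ℝ) * A ≤ (p * μ) * A := by
      apply mul_le_mul_of_nonneg_right hpμe
      exact_mod_cast hA0
    have h3 : (0 : ℝ) ≤ (B : ℝ) * (e * r) := by
      apply mul_nonneg (by exact_mod_cast hB0) (by positivity)
    nlinarith
  have hmlt : (m : ℝ) / μ < ((A + B + 1 : ℤ) : ℝ) := by
    rw [div_lt_iff₀ hμ0]
    have hmm : (m : ℝ) * p < (((A + B + 1 : ℤ) : ℝ) * μ) * p := by
      rw [hmp]
      calc (i : ℝ) + Δ + e * r < ((A + B + 1 : ℤ) : ℝ) * (p * μ) := key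
      _ = (((A + B + 1 : ℤ) : ℝ) * μ) * p := by ring
    exact lt_of_mul_lt_mul_right hmm hp0.le
  have hfl : ⌊(m : ℝ) / μ⌋ < A + B + 1 := Int.floor_lt.2 hmlt
  omega
end arith

theorem stmt4 (p : ℕ) [Fact p.Prime] (k : Type) [Field k] [CharP k p] [PerfectRing k p]
    (e : ℕ) (he : 1 ≤ e) (E : Polynomial (WittVector p k))
    (hE_monic : E.Monic) (hE_deg : E.natDegree = e)
    (hE_coeff : ∀ j < e, ∃ c, E.coeff j = p * c)
    (hE_zero : ¬ ∃ c, E.coeff 0 = (p : WittVector p k) ^ 2 * c)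
    (r : ℕ) (hr : 1 ≤ r)
    (ν : ℚ) (hν0 : 0 ≤ ν) (hν1 : ν < 1 / (e : ℚ))
    (μ : ℝ) (hμ : (e : ℝ) * r / ((p : ℝ) - 1) < μ)
    (f g : PowerSeries (K₀ p k))
    (hf : memS p k (ν : ℝ) f) (hg : memS p k (1 / μ) g)
    (heq : (ES p k E) ^ r * f = φps p k g) :
    memS p k (1 / ((p : ℝ) * μ - e * r)) f := by
  have hp2 : 2 ≤ p := (Fact.out : p.Prime).two_le
  have hp1 : 1 ≤ p := by omega
  have hpR : (2 : ℝ) ≤ p := by exact_mod_cast hp2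
  have he0R : (0 : ℝ) < e := by exact_mod_cast he
  have hr1R : (1 : ℝ) ≤ r := by exact_mod_cast hr
  have hμ0 : 0 < μ :=
    lt_of_le_of_lt (div_nonneg (by positivity) (by linarith)) hμ
  have hμer : (e : ℝ) * r < μ * ((p : ℝ) - 1) :=
    (div_lt_iff₀ (by linarith)).1 hμ
  have hpμer : (e : ℝ) * r < p * μ := by nlinarith
  have hpμe : (e : ℝ) ≤ p * μ := by nlinarith
  have hνR : ((ν : ℝ)) < 1 / (e : ℝ) := by
    have h2 : ((ν : ℚ) : ℝ) < ((1 / (e : ℚ) : ℚ) : ℝ) := by exact_mod_cast hν1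
    push_cast at h2
    exact h2
  have hν0R : (0 : ℝ) ≤ (ν : ℝ) := by exact_mod_cast hν0
  set c : ℝ := 1 / (e : ℝ) - (ν : ℝ) with hc
  have hc0 : 0 < c := by rw [hc]; linarith
  -- degree facts about E^r
  have hdegEr : (E ^ r).natDegree = e * r := by
    rw [hE_monic.natDegree_pow, hE_deg, mul_comm]
  have hcoeff_top : (E ^ r).coeff (e * r) = 1 := by
    have := (hE_monic.pow r).coeff_natDegree
    rwa [hdegEr] at this
  -- valuation bound for coefficients of E^r
  have hvc : ∀ j : ℕ, vge p k ((r - j / e : ℕ) : ℤ) (ι p k ((E ^ r).coeff j)) := by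
    intro j
    obtain ⟨w, hw⟩ := pow_dvd_coeff_pow p e r he E hE_monic hE_deg hE_coeff j
    exact ⟨w, by rw [hw, map_mul, map_pow, map_natCast, zpow_natCast]⟩
  -- real bound for the weights
  have hvr : ∀ j : ℕ, j < e * r → ((e * r - j : ℕ) : ℝ) / e ≤ ((r - j / e : ℕ) : ℝ) := by
    intro j hj
    rw [div_le_iff₀ he0R]
    have h1 : j / e * e ≤ j := Nat.div_mul_le_self _ _
    have h2 : (r - j / e) * e = r * e - j / e * e := Nat.sub_mul _ _ _
    have h4 : ((e * r - j : ℕ) : ℝ) ≤ (((r - j / e) * e : ℕ) : ℝ) := by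
      have h5 : e * r - j ≤ (r - j / e) * e := by
        rw [h2, mul_comm e r]; omega
      exact_mod_cast h5
    calc ((e * r - j : ℕ) : ℝ) ≤ (((r - j / e) * e : ℕ) : ℝ) := h4
    _ = ((r - j / e : ℕ) : ℝ) * e := by push_cast; ring
  have hvceil : ∀ j : ℕ, j < e * r → ⌈((e * r - j : ℕ) : ℝ) / e⌉ ≤ ((r - j / e : ℕ) : ℤ) := by
    intro j hj
    apply Int.ceil_le.2
    have := hvr j hj
    exact_mod_cast this
  -- the recursion
  have hrec : ∀ i : ℕ, PowerSeries.coeff i f =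
      PowerSeries.coeff (i + e * r) (φps p k g)
        - ∑ j ∈ Finset.range (e * r),
            ι p k ((E ^ r).coeff j) * PowerSeries.coeff (i + e * r - j) f := by
    intro i
    have h0 := congrArg (PowerSeries.coeff (i + e * r)) heq
    have hES : (ES p k E) ^ r =
        (((E ^ r).map (ι p k) : Polynomial (K₀ p k)) : PowerSeries (K₀ p k)) := by
      rw [ES, Polynomial.map_pow, Polynomial.coe_pow]
    rw [hES, PowerSeries.coeff_mul, Finset.Nat.sum_antidiagonal_eq_sum_range_succ_mk] at h0
    simp only [Polynomial.coeff_coe, Polynomial.coeff_map] at h0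
    have hss : Finset.range (e * r + 1) ⊆ Finset.range (i + e * r + 1) := by
      apply Finset.range_subset_range.2; omega
    rw [← Finset.sum_subset hss (fun j hj hj' => by
      have hjgt : e * r < j := by
        simp only [Finset.mem_range] at hj hj'
        omega
      rw [Polynomial.coeff_eq_zero_of_natDegree_lt (by omega : (E ^ r).natDegree < j),
        map_zero, zero_mul])] at h0
    rw [Finset.sum_range_succ, hcoeff_top, map_one, one_mul, Nat.add_sub_cancel] at h0
    rw [← h0]; ring
  -- the main induction
  have key : ∀ t : ℕ, ∀ i : ℕ,
      vge p k (min (Gf p e r μ i) ⌈(t : ℝ) * c - (ν : ℝ) * i⌉)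
        (PowerSeries.coeff i f) := by
    intro t
    induction t with
    | zero =>
      intro i
      have h0 : ((0 : ℕ) : ℝ) * c - (ν : ℝ) * i = -((ν : ℝ) * i) := by push_cast; ring
      refine vge_mono p k ?_ ((valGE_eq_vge p k _ _).1 (hf i))
      rw [h0]
      exact min_le_right _ _
    | succ t ih =>
      intro i
      rw [hrec i]
      apply vge_sub
      · -- the φps g coefficient
        by_cases hdv : p ∣ (i + e * r)
        · have hφ : PowerSeries.coeff (i + e * r) (φps p k g) =
              σ p k (PowerSeries.coeff ((i + e * r) / p) g) := by
            rw [φps, PowerSeries.coeff_mk, if_pos hdv]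
          rw [hφ]
          have hbg := (valGE_eq_vge p k _ _).1 (hg ((i + e * r) / p))
          refine vge_mono p k ?_ (vge_sigma p k hbg)
          have hceq : ⌈-(1 / μ * (((i + e * r) / p : ℕ) : ℝ))⌉ =
              -⌊(((i + e * r) / p : ℕ) : ℝ) / μ⌋ := by
            rw [show (1 : ℝ) / μ * (((i + e * r) / p : ℕ) : ℝ) =
              (((i + e * r) / p : ℕ) : ℝ) / μ by ring, Int.ceil_neg]
          rw [hceq]
          exact le_trans (min_le_left _ _) (Gf_le_base p e r μ i hp1 he hμ0 hpμe hdv)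
        · have hφ : PowerSeries.coeff (i + e * r) (φps p k g) = 0 := by
            rw [φps, PowerSeries.coeff_mk, if_neg hdv]
          rw [hφ]
          exact vge_zero p k _
      · -- the sum
        apply vge_sum
        intro j hj
        have hjlt : j < e * r := Finset.mem_range.1 hj
        have hd : i + e * r - j = i + (e * r - j) := by omega
        rw [hd]
        have h3 := vge_mul p k (hvc j) (ih (i + (e * r - j)))
        refine vge_mono p k ?_ h3
        have hG : Gf p e r μ i ≤ ((r - j / e : ℕ) : ℤ) + Gf p e r μ (i + (e * r - j)) := by
          have hstep := Gf_step p e r μ i hp1 he hμ0 hpμe (e * r - j)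
          have hcl := hvceil j hjlt
          exact le_trans hstep (add_le_add_left hcl _)
        have hF : ⌈((t + 1 : ℕ) : ℝ) * c - (ν : ℝ) * i⌉ ≤
            ((r - j / e : ℕ) : ℤ) + ⌈(t : ℝ) * c - (ν : ℝ) * ((i + (e * r - j) : ℕ) : ℝ)⌉ := by
          rw [add_comm ((r - j / e : ℕ) : ℤ), ← Int.ceil_add_intCast]
          apply Int.ceil_le_ceil
          have hcast : ((i + (e * r - j) : ℕ) : ℝ) = (i : ℝ) + ((e * r - j : ℕ) : ℝ) := by
            push_cast
            ring
          rw [hcast]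
          have hd1 : (1 : ℝ) ≤ ((e * r - j : ℕ) : ℝ) := by
            have h9 : 1 ≤ e * r - j := by omega
            exact_mod_cast h9
          have hv := hvr j hjlt
          have hveg : c + (ν : ℝ) * ((e * r - j : ℕ) : ℝ) ≤ ((r - j / e : ℕ) : ℝ) := by
            have hgoal : c + (ν : ℝ) * ((e * r - j : ℕ) : ℝ) ≤ ((e * r - j : ℕ) : ℝ) / e := by
              rw [hc]
              have hsplit : ((e * r - j : ℕ) : ℝ) / e =
                  (1 / (e : ℝ) - (ν : ℝ)) * ((e * r - j : ℕ) : ℝ)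
                    + (ν : ℝ) * ((e * r - j : ℕ) : ℝ) := by
                field_simp
                ring
              rw [hsplit]
              have h8 : (1 / (e : ℝ) - (ν : ℝ)) * 1 ≤
                  (1 / (e : ℝ) - (ν : ℝ)) * ((e * r - j : ℕ) : ℝ) := by
                apply mul_le_mul_of_nonneg_left hd1 (by linarith)
              linarith
            linarith
          have hnat1 : ((t + 1 : ℕ) : ℝ) = (t : ℝ) + 1 := by push_cast; ring
          rw [hnat1]
          push_cast
          linarith
        rw [show ((r - j / e : ℕ) : ℤ) + min (Gf p e r μ (i + (e * r - j)))
              ⌈(t : ℝ) * c - (ν : ℝ) * ((i + (e * r - j) : ℕ) : ℝ)⌉ =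
            min (((r - j / e : ℕ) : ℤ) + Gf p e r μ (i + (e * r - j)))
              (((r - j / e : ℕ) : ℤ) + ⌈(t : ℝ) * c - (ν : ℝ) * ((i + (e * r - j) : ℕ) : ℝ)⌉)
          from (min_add_add_left _ _ _).symm]
        exact le_min (le_trans (min_le_left _ _) hG) (le_trans (min_le_right _ _) hF)
  -- conclusion
  intro i
  rw [valGE_eq_vge]
  have hw0 : (0 : ℝ) < p * μ - e * r := by linarith
  have hceq : ⌈-(1 / ((p : ℝ) * μ - e * r) * i)⌉ = -⌊(i : ℝ) / ((p : ℝ) * μ - e * r)⌋ := by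
    rw [show (1 : ℝ) / ((p : ℝ) * μ - e * r) * i = (i : ℝ) / ((p : ℝ) * μ - e * r) by ring,
      Int.ceil_neg]
  rw [hceq]
  obtain ⟨t, ht⟩ := exists_nat_ge
    (((ν : ℝ) * i + ((-⌊(i : ℝ) / ((p : ℝ) * μ - e * r)⌋ : ℤ) : ℝ)) / c)
  have htc : ((-⌊(i : ℝ) / ((p : ℝ) * μ - e * r)⌋ : ℤ) : ℝ) ≤ (t : ℝ) * c - (ν : ℝ) * i := by
    rw [div_le_iff₀ hc0] at ht
    linarith
  have hFt : -⌊(i : ℝ) / ((p : ℝ) * μ - e * r)⌋ ≤ ⌈(t : ℝ) * c - (ν : ℝ) * i⌉ := by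
    have h1 := Int.le_ceil ((t : ℝ) * c - (ν : ℝ) * i)
    have h2 : ((-⌊(i : ℝ) / ((p : ℝ) * μ - e * r)⌋ : ℤ) : ℝ) ≤
        ((⌈(t : ℝ) * c - (ν : ℝ) * i⌉ : ℤ) : ℝ) := le_trans htc h1
    exact_mod_cast h2
  have hGt : -⌊(i : ℝ) / ((p : ℝ) * μ - e * r)⌋ ≤ Gf p e r μ i :=
    Gf_ge p e r μ i hp1 he hμ0 hpμe hpμer
  exact vge_mono p k (le_min hGt hFt) (key t i)
end

section
/- Let r ≥ 1 be an integer and let ν be a rational number with 0 < ν < (p−1)/(p·e·r); define the rational ν' by 1/ν' = 1/ν − e·r. Then every g ∈ 𝔖_ν can be written as g = E(u)^r·x + y, where y ∈ 𝔖 = O_{K0}[[u]] and x ∈ 𝔖_{ν'} is a series x = Σ_{i≥0} x_i u^i whose coefficients x_i vanish for all indices i < 1/ν'. -/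
noncomputable section

open PowerSeries

variable (p : ℕ) [hp : Fact p.Prime] (k : Type) [Field k] [CharP k p] [PerfectRing k p]

namespace Aux

open WittVector

local notation "W" => WittVector p k

/-- coefficients of `p^n * c` vanish below `n`. -/
theorem coeff_pow_p_mul (c : W) (n : ℕ) (j : ℕ) (hj : j < n) :
    ((p : W) ^ n * c).coeff j = 0 := by
  induction n generalizing c j with
  | zero => omega
  | succ n ih =>
    have h1 : (p : W) ^ (n + 1) * c = verschiebung (frobenius ((p : W) ^ n * c)) := by
      rw [verschiebung_frobenius]; ring
    rw [h1]
    cases j with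
    | zero => exact verschiebung_coeff_zero _
    | succ j =>
      rw [verschiebung_coeff_succ, coeff_frobenius_charP, ih c j (by omega)]
      exact zero_pow (Nat.Prime.ne_zero hp.out)

/-- if coefficients vanish below `n` then divisible by `p^n`. -/
theorem exists_of_coeff_eq_zero (x : W) (n : ℕ) (h : ∀ j < n, x.coeff j = 0) :
    ∃ c : W, x = (p : W) ^ n * c := by
  induction n generalizing x with
  | zero => exact ⟨x, by simp⟩
  | succ n ih =>
    set z : W := WittVector.mk p (fun i => x.coeff (i + 1)) with hz
    have hVz : verschiebung z = x := by
      apply WittVector.ext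
      intro m
      cases m with
      | zero => rw [verschiebung_coeff_zero, h 0 (by omega)]
      | succ m => rw [verschiebung_coeff_succ, hz, WittVector.coeff_mk]
    set z' : W := (frobeniusEquiv p k).symm z with hz'
    have hFz' : frobenius z' = z := (frobeniusEquiv p k).apply_symm_apply z
    have hx : x = (p : W) * z' := by
      rw [← hVz, ← hFz', verschiebung_frobenius]; ring
    have hz'c : ∀ j < n, z'.coeff j = 0 := by
      intro j hjn
      have : z.coeff j = 0 := by
        rw [hz, WittVector.coeff_mk]; exact h (j + 1) (by omega)
      rw [← hFz', coeff_frobenius_charP] at this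
      exact pow_eq_zero_iff (Nat.Prime.ne_zero hp.out) |>.mp this
    obtain ⟨c, hc⟩ := ih z' hz'c
    exact ⟨c, by rw [hx, hc, pow_succ]; ring⟩

/-- low coefficients only depend on the residue mod p^n -/
theorem coeff_eq_of_dvd_sub {x y : W} {n : ℕ} (h : ∃ c, x - y = (p : W) ^ n * c)
    (j : ℕ) (hj : j < n) : x.coeff j = y.coeff j := by
  obtain ⟨c, hc⟩ := h
  have h2 : WittVector.truncate n x = WittVector.truncate n y := by
    have h3 : WittVector.truncate n (x - y) = 0 := by
      rw [hc]
      apply TruncatedWittVector.ext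
      intro i
      rw [WittVector.coeff_truncate, coeff_pow_p_mul p k c n i i.isLt]
      simp
    exact sub_eq_zero.mp (show WittVector.truncate n x - WittVector.truncate n y = 0 by
      rw [← map_sub]; exact h3)
  have := congrArg (fun t => TruncatedWittVector.coeff ⟨j, hj⟩ t) h2
  simpa [WittVector.coeff_truncate] using this

theorem dvd_sub_of_coeff_eq {x y : W} {n : ℕ} (h : ∀ j < n, x.coeff j = y.coeff j) :
    ∃ c, x - y = (p : W) ^ n * c := by
  apply exists_of_coeff_eq_zero
  intro j hj
  have h2 : WittVector.truncate n (x - y) = 0 := by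
    rw [map_sub, sub_eq_zero]
    apply TruncatedWittVector.ext
    intro i
    rw [WittVector.coeff_truncate, WittVector.coeff_truncate]
    exact h i i.isLt
  rw [← WittVector.coeff_truncate (x - y) (⟨j, hj⟩ : Fin n), h2]
  simp

theorem hausdorffW (d : W) (h : ∀ n : ℕ, ∃ c, d = (p : W) ^ n * c) : d = 0 := by
  apply WittVector.ext
  intro j
  obtain ⟨c, hc⟩ := h (j + 1)
  rw [hc, coeff_pow_p_mul p k c (j+1) j (by omega), WittVector.zero_coeff]

/-- p-adic summability in W(k): partial sums of terms with `t n ∈ p^(φ n) W`, `φ → ∞`. -/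
theorem wittSum (t : ℕ → W) (φ : ℕ → ℕ)
    (ht : ∀ n, ∃ c, t n = (p : W) ^ (φ n) * c)
    (hφ : ∀ M : ℕ, ∃ n₀, ∀ n ≥ n₀, M ≤ φ n) :
    ∃ S : W, ∀ M : ℕ, ∃ n₀, ∀ n ≥ n₀,
      ∃ c, S - (∑ m ∈ Finset.range n, t m) = (p : W) ^ M * c := by
  classical
  -- monotone threshold function
  have hψ : ∃ ψ : ℕ → ℕ, Monotone ψ ∧ ∀ M n, ψ M ≤ n → M ≤ φ n := by
    choose f hf using hφ
    refine ⟨fun M => ∑ m ∈ Finset.range (M + 1), f m, ?_, ?_⟩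
    · intro a b hab
      exact Finset.sum_le_sum_of_subset (by simpa using Nat.add_le_add_right hab 1)
    · intro M n hn
      apply hf M n
      calc f M ≤ ∑ m ∈ Finset.range (M+1), f m :=
            Finset.single_le_sum (fun i _ => Nat.zero_le _) (by simp)
        _ ≤ n := hn
  obtain ⟨ψ, hmono, hψ⟩ := hψ
  set P : ℕ → W := fun n => ∑ m ∈ Finset.range n, t m with hP
  -- partial sums congruent mod p^M beyond ψ M
  have hcong : ∀ M n n', ψ M ≤ n → n ≤ n' → ∃ c, P n' - P n = (p : W) ^ M * c := by
    intro M n n' hn hnn'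
    have : P n' - P n = ∑ m ∈ Finset.Ico n n', t m := by
      rw [hP]
      simp [Finset.sum_Ico_eq_sub _ hnn']
    rw [this]
    have : ∀ m ∈ Finset.Ico n n', ∃ c, t m = (p : W) ^ M * c := by
      intro m hm
      obtain ⟨c, hc⟩ := ht m
      have hMφ : M ≤ φ m := hψ M m (le_trans hn (Finset.mem_Ico.mp hm).1)
      exact ⟨(p : W) ^ (φ m - M) * c, by rw [hc, ← mul_assoc, ← pow_add,
        Nat.add_sub_cancel' hMφ]⟩
    choose! F hF using this
    refine ⟨∑ m ∈ Finset.Ico n n', F m, ?_⟩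
    rw [Finset.mul_sum]
    exact Finset.sum_congr rfl hF
  refine ⟨WittVector.mk p (fun j => (P (ψ (j + 1))).coeff j), ?_⟩
  intro M
  refine ⟨ψ M, fun n hn => ?_⟩
  apply dvd_sub_of_coeff_eq p k  -- (x - y) with y := P n via coeff equality... need form x.coeff = y.coeff
  intro j hj
  rw [WittVector.coeff_mk]
  -- both P (ψ (j+1)) and P n are ≥ ψ (j+1); show coeff j equal
  have hψj : ψ (j + 1) ≤ ψ M := hmono (by omega)
  have h1 : ∃ c, P n - P (ψ (j + 1)) = (p : W) ^ (j + 1) * c :=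
    hcong (j + 1) (ψ (j + 1)) n le_rfl (le_trans hψj hn)
  exact (coeff_eq_of_dvd_sub p k h1 j (by omega)).symm

end Aux

namespace Aux

open WittVector

section ValGE

local notation "W" => WittVector p k
local notation "K" => K₀ p k

theorem p_ne_zero_W : (p : W) ≠ 0 := by
  intro h
  have h1 : (p : W) = verschiebung (frobenius 1) := by rw [verschiebung_frobenius]; ring
  have h2 : ((p : W)).coeff 1 = 1 := by
    rw [h1, verschiebung_coeff_succ, coeff_frobenius_charP, one_coeff_zero, one_pow]
  rw [h] at h2
  simp at h2

theorem iota_inj : Function.Injective (ι p k) :=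
  IsFractionRing.injective (WittVector p k) (K₀ p k)

theorem iota_natCast : ι p k (p : W) = (p : K) := map_natCast _ _

theorem p_ne_zero_K : (p : K) ≠ 0 := by
  rw [← iota_natCast]
  exact fun h => p_ne_zero_W p k (iota_inj p k (by simpa using h))

/-- `p^m * ι w = ι (p^m * w)` for nonneg integer exponents. -/
theorem pz (m : ℤ) (hm : 0 ≤ m) (w : W) :
    (p : K) ^ m * ι p k w = ι p k ((p : W) ^ m.toNat * w) := by
  rw [map_mul, map_pow, iota_natCast, ← zpow_natCast, Int.toNat_of_nonneg hm]

theorem valGE_zero (c : ℝ) : valGE p k c 0 := ⟨0, by simp⟩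

theorem valGE_neg {c : ℝ} {a : K} (h : valGE p k c a) : valGE p k c (-a) := by
  obtain ⟨w, hw⟩ := h; exact ⟨-w, by rw [hw, map_neg]; ring⟩

theorem valGE_add {c : ℝ} {a b : K} (ha : valGE p k c a) (hb : valGE p k c b) :
    valGE p k c (a + b) := by
  obtain ⟨w, hw⟩ := ha; obtain ⟨v, hv⟩ := hb
  exact ⟨w + v, by rw [hw, hv, map_add]; ring⟩

theorem valGE_sub {c : ℝ} {a b : K} (ha : valGE p k c a) (hb : valGE p k c b) :
    valGE p k c (a - b) := by
  rw [sub_eq_add_neg]; exact valGE_add p k ha (valGE_neg p k hb)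

theorem valGE_sum {α : Type*} {c : ℝ} {s : Finset α} {F : α → K}
    (h : ∀ i ∈ s, valGE p k c (F i)) : valGE p k c (∑ i ∈ s, F i) := by
  classical
  induction s using Finset.induction with
  | empty => simpa using valGE_zero p k c
  | insert i s hni ih =>
    rw [Finset.sum_insert hni]
    exact valGE_add p k (h _ (Finset.mem_insert_self _ _))
      (ih fun i hi => h i (Finset.mem_insert_of_mem hi))

theorem valGE_mono_ceil {c c' : ℝ} {a : K} (hcc : ⌈c'⌉ ≤ ⌈c⌉) (h : valGE p k c a) :
    valGE p k c' a := by
  obtain ⟨w, hw⟩ := h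
  refine ⟨(p : W) ^ (⌈c⌉ - ⌈c'⌉).toNat * w, ?_⟩
  rw [hw, ← pz p k _ (by omega), ← mul_assoc, ← zpow_add₀ (p_ne_zero_K p k)]
  congr 2
  omega

theorem valGE_mono {c c' : ℝ} {a : K} (hcc : c' ≤ c) (h : valGE p k c a) :
    valGE p k c' a := valGE_mono_ceil p k (Int.ceil_le_ceil hcc) h

theorem valGE_mul {c d : ℝ} {a b : K} (ha : valGE p k c a) (hb : valGE p k d b) :
    valGE p k (c + d) (a * b) := by
  obtain ⟨w, hw⟩ := ha; obtain ⟨v, hv⟩ := hb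
  have hle : ⌈c + d⌉ ≤ ⌈c⌉ + ⌈d⌉ := Int.ceil_add_le c d
  refine ⟨(p : W) ^ (⌈c⌉ + ⌈d⌉ - ⌈c + d⌉).toNat * (w * v), ?_⟩
  rw [hw, hv, ← pz p k _ (by omega), map_mul, ← mul_assoc, ← mul_assoc, ← zpow_add₀ (p_ne_zero_K p k)]
  have : ⌈c + d⌉ + (⌈c⌉ + ⌈d⌉ - ⌈c + d⌉) = ⌈c⌉ + ⌈d⌉ := by omega
  rw [this, zpow_add₀ (p_ne_zero_K p k)]
  ring

theorem valGE_iota (w : W) : valGE p k 0 (ι p k w) := ⟨w, by simp⟩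

theorem valGE_iota_p (w : W) : valGE p k 1 (ι p k ((p : W) * w)) := by
  refine ⟨w, ?_⟩
  rw [map_mul, iota_natCast]
  norm_num

theorem hausdorffK (d : K) (h : ∀ M : ℕ, valGE p k (M : ℝ) d) : d = 0 := by
  obtain ⟨w₀, hw₀⟩ := h 0
  have hw₀' : d = ι p k w₀ := by rw [hw₀]; norm_num
  have : ∀ M : ℕ, ∃ c, w₀ = (p : W) ^ M * c := by
    intro M
    obtain ⟨w, hw⟩ := h M
    have hM : (⌈(M : ℝ)⌉ : ℤ) = (M : ℤ) := by
      rw [Int.ceil_natCast]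
    rw [hM, pz p k _ (by omega)] at hw
    refine ⟨w, iota_inj p k ?_⟩
    rw [← hw₀', hw]
    simp
  rw [hw₀', hausdorffW p k w₀ this, map_zero]

/-- p-adic summability in `K₀` with valuation lower bounds. -/
theorem ksum (a : ℕ → K) (c : ℝ) (φ : ℕ → ℕ)
    (hφ : ∀ M : ℕ, ∃ n₀, ∀ n ≥ n₀, M ≤ φ n)
    (h : ∀ n, valGE p k (c + φ n) (a n)) :
    ∃ A : K, valGE p k c A ∧
      ∀ M : ℕ, ∃ n₀, ∀ n ≥ n₀, valGE p k (c + M) (A - ∑ m ∈ Finset.range n, a m) := by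
  have hceil : ∀ m : ℕ, ⌈c + (m : ℝ)⌉ = ⌈c⌉ + m := fun m => by
    rw [Int.ceil_add_natCast]
  have key : ∀ n, ∃ w : W, a n = (p : K) ^ ⌈c⌉ * ι p k ((p : W) ^ φ n * w) := by
    intro n
    obtain ⟨w, hw⟩ := h n
    refine ⟨w, ?_⟩
    rw [hw, hceil, zpow_add₀ (p_ne_zero_K p k), mul_assoc,
      pz p k (φ n : ℤ) (Int.natCast_nonneg _)]
    simp
  choose w hw using key
  set t : ℕ → W := fun n => (p : W) ^ φ n * w n with ht
  obtain ⟨S, hS⟩ := wittSum p k t φ (fun n => ⟨w n, rfl⟩) hφ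
  refine ⟨(p : K) ^ ⌈c⌉ * ι p k S, ⟨S, rfl⟩, ?_⟩
  intro M
  obtain ⟨n₀, hn₀⟩ := hS M
  refine ⟨n₀, fun n hn => ?_⟩
  obtain ⟨d, hd⟩ := hn₀ n hn
  refine ⟨d, ?_⟩
  have : (∑ m ∈ Finset.range n, a m) = (p : K) ^ ⌈c⌉ * ι p k (∑ m ∈ Finset.range n, t m) := by
    rw [map_sum, Finset.mul_sum]
    exact Finset.sum_congr rfl fun m _ => hw m
  rw [this, ← mul_sub, ← map_sub, hd, hceil, zpow_add₀ (p_ne_zero_K p k), mul_assoc,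
    pz p k (M : ℤ) (Int.natCast_nonneg _)]
  simp

end ValGE

end Aux

namespace Aux

open PowerSeries

section Iter

local notation "K" => K₀ p k

variable (D N : ℕ) (ER g : PowerSeries (K₀ p k))

def qps (f : PowerSeries (K₀ p k)) : PowerSeries (K₀ p k) :=
  PowerSeries.mk fun i => if N ≤ i then PowerSeries.coeff (i + D) f else 0

def sps (f : PowerSeries (K₀ p k)) : PowerSeries (K₀ p k) :=
  PowerSeries.mk fun i => if i < N + D then PowerSeries.coeff i f else 0

theorem split (f : PowerSeries (K₀ p k)) :
    f = X ^ D * qps p k D N f + sps p k D N f := by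
  ext j
  rw [map_add, PowerSeries.coeff_X_pow_mul']
  simp only [qps, sps, PowerSeries.coeff_mk]
  split_ifs with h1 h2 h3 <;> try omega
  · rw [Nat.sub_add_cancel h1]; ring
  · ring
  · ring

def iter (n : ℕ) : PowerSeries (K₀ p k) :=
  Nat.rec g (fun _ f => -((ER - X ^ D) * qps p k D N f)) n

theorem iter_succ (n : ℕ) :
    iter p k D N ER g (n + 1) = -((ER - X ^ D) * qps p k D N (iter p k D N ER g n)) := rfl

theorem tele (n : ℕ) :
    g = ER * (∑ m ∈ Finset.range n, qps p k D N (iter p k D N ER g m)) +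
        (∑ m ∈ Finset.range n, sps p k D N (iter p k D N ER g m)) +
        iter p k D N ER g n := by
  induction n with
  | zero => simp [iter]
  | succ n ih =>
    have h := split p k D N (iter p k D N ER g n)
    conv_lhs => rw [ih]
    rw [Finset.sum_range_succ, Finset.sum_range_succ, iter_succ]
    linear_combination h

theorem est (ν δ : ℝ) (hν : 0 ≤ ν) (hδ : δ ≤ 1 - ν * D)
    (hER : ∀ m, valGE p k 1 (PowerSeries.coeff m (ER - X ^ D)))
    (hg : ∀ i : ℕ, valGE p k (-(ν * i)) (PowerSeries.coeff i g)) :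
    ∀ n i : ℕ, valGE p k (n * δ - ν * i) (PowerSeries.coeff i (iter p k D N ER g n)) := by
  intro n
  induction n with
  | zero =>
    intro i
    exact valGE_mono p k (le_of_eq (by push_cast; ring)) (hg i)
  | succ n ih =>
    intro j
    rw [iter_succ, map_neg]
    apply valGE_neg
    rw [PowerSeries.coeff_mul]
    apply valGE_sum
    intro m hm
    have hm2 : m.2 ≤ j := by
      have := Finset.HasAntidiagonal.mem_antidiagonal.mp hm
      omega
    by_cases hN : N ≤ m.2
    · have t2 := ih (m.2 + D)
      have t3 := valGE_mul p k (hER m.1) t2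
      have t4 : PowerSeries.coeff m.2 (qps p k D N (iter p k D N ER g n)) =
          PowerSeries.coeff (m.2 + D) (iter p k D N ER g n) := by
        simp [qps, hN]
      rw [t4]
      apply valGE_mono p k ?_ t3
      have hmul : ν * (m.2 : ℝ) ≤ ν * (j : ℝ) :=
        mul_le_mul_of_nonneg_left (by exact_mod_cast hm2) hν
      push_cast
      nlinarith
    · have t4 : PowerSeries.coeff m.2 (qps p k D N (iter p k D N ER g n)) = 0 := by
        simp [qps, hN]
      rw [t4, mul_zero]
      exact valGE_zero p k _

end Iter

end Aux

namespace Aux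

theorem ER_sub_coeff (e : ℕ) (E : Polynomial (WittVector p k)) (hE_monic : E.Monic)
    (hE_deg : E.natDegree = e) (hE_coeff : ∀ j < e, ∃ c, E.coeff j = p * c) (r : ℕ) :
    ∀ m : ℕ, ∃ c : WittVector p k,
      (E ^ r - Polynomial.X ^ (e * r)).coeff m = p * c := by
  intro m
  set I := Ideal.span {(p : WittVector p k)} with hI
  have hmap : E.map (Ideal.Quotient.mk I) = Polynomial.X ^ e := by
    ext j
    rw [Polynomial.coeff_map, Polynomial.coeff_X_pow]
    rcases lt_trichotomy j e with h | h | h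
    · obtain ⟨c, hc⟩ := hE_coeff j h
      rw [hc, if_neg (by omega), Ideal.Quotient.eq_zero_iff_mem, hI,
        Ideal.mem_span_singleton]
      exact dvd_mul_right _ _
    · subst h
      rw [if_pos rfl, ← hE_deg, Polynomial.Monic.coeff_natDegree hE_monic, map_one]
    · rw [Polynomial.coeff_eq_zero_of_natDegree_lt (by omega), if_neg (by omega), map_zero]
  have h2 : (E ^ r - Polynomial.X ^ (e * r)).map (Ideal.Quotient.mk I) = 0 := by
    rw [Polynomial.map_sub, Polynomial.map_pow, hmap, Polynomial.map_pow, Polynomial.map_X,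
      pow_mul, sub_self]
  have h3 : Ideal.Quotient.mk I ((E ^ r - Polynomial.X ^ (e * r)).coeff m) = 0 := by
    rw [← Polynomial.coeff_map, h2, Polynomial.coeff_zero]
  rw [Ideal.Quotient.eq_zero_iff_mem, hI, Ideal.mem_span_singleton] at h3
  obtain ⟨c, hc⟩ := h3
  exact ⟨c, hc⟩

end Aux

set_option maxHeartbeats 2000000 in
theorem stmt5 (p : ℕ) [Fact p.Prime] (k : Type) [Field k] [CharP k p] [PerfectRing k p]
    (e : ℕ) (he : 1 ≤ e) (E : Polynomial (WittVector p k))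
    (hE_monic : E.Monic) (hE_deg : E.natDegree = e)
    (hE_coeff : ∀ j < e, ∃ c, E.coeff j = p * c)
    (hE_zero : ¬ ∃ c, E.coeff 0 = (p : WittVector p k) ^ 2 * c)
    (r : ℕ) (hr : 1 ≤ r)
    (ν ν' : ℚ) (hν0 : 0 < ν) (hν1 : ν < ((p : ℚ) - 1) / (p * e * r))
    (hν' : ν'⁻¹ = ν⁻¹ - e * r)
    (g : PowerSeries (K₀ p k)) (hg : memS p k (ν : ℝ) g) :
    ∃ x y : PowerSeries (K₀ p k),
      memS p k (ν' : ℝ) x ∧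
      (∀ i : ℕ, (i : ℚ) < ν'⁻¹ → PowerSeries.coeff i x = 0) ∧
      memS p k 0 y ∧
      g = (ES p k E) ^ r * x + y := by
  classical
  obtain ⟨hp⟩ := ‹Fact p.Prime›
  -- basic numeric setup
  set D : ℕ := e * r with hD
  have hD1 : 1 ≤ D := Nat.one_le_iff_ne_zero.mpr (by positivity)
  have hp2 : (2 : ℚ) ≤ (p : ℚ) := by exact_mod_cast hp.two_le
  have hDQ : (0 : ℚ) < (D : ℚ) := by exact_mod_cast hD1
  -- ν * D < 1 - 1/p
  have qD : ν * D < 1 - 1 / (p : ℚ) := by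
    have hpos : (0 : ℚ) < (p : ℚ) * (D : ℚ) := by positivity
    have h1 : ν * ((p : ℚ) * D) < ((p : ℚ) - 1) / ((p : ℚ) * D) * ((p : ℚ) * D) := by
      have h2 : ((p : ℚ) - 1) / ((p : ℚ) * ↑e * ↑r) = ((p : ℚ) - 1) / ((p : ℚ) * D) := by
        rw [hD]; push_cast; ring_nf
      apply mul_lt_mul_of_pos_right _ hpos
      rw [← h2]; exact hν1
    rw [div_mul_cancel₀ _ (ne_of_gt hpos)] at h1
    have h3 : ν * ↑D * (p : ℚ) < (p:ℚ) - 1 := by linarith [h1]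
    have hppos : (0:ℚ) < (p:ℚ) := by linarith
    have h6 : (1:ℚ) - 1/(p:ℚ) = ((p:ℚ)-1)/(p:ℚ) := by field_simp
    rw [h6]
    exact (lt_div_iff₀ hppos).mpr h3
  have qD1 : ν * D < 1 := by
    have : (0:ℚ) < 1 / (p:ℚ) := by positivity
    linarith
  -- ν' is positive
  have hνinv : (0 : ℚ) < ν'⁻¹ := by
    have h1 : ν'⁻¹ = (1 - ν * D) / ν := by
      rw [hν']
      field_simp [ne_of_gt hν0]
      push_cast [hD]
      ring
    rw [h1]
    exact div_pos (by linarith) hν0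
  have hν'0 : (0 : ℚ) < ν' := inv_pos.mp hνinv
  have hrel : ν' - ν = ν * ν' * D := by
    have h1 : ν' * (ν'⁻¹) = 1 := mul_inv_cancel₀ (ne_of_gt hν'0)
    have h2 : ν * (ν⁻¹) = 1 := mul_inv_cancel₀ (ne_of_gt hν0)
    have h3 : ν' * ν'⁻¹ = 1 := h1
    rw [hν'] at h3
    -- ν' * (ν⁻¹ - D) = 1  with (D:ℚ) = e*r
    have h4 : ν' * ν⁻¹ - ν' * (D:ℚ) = 1 := by
      rw [← h3]; push_cast [hD]; ring
    nlinarith [h4, h2]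
  set N : ℕ := ⌈ν'⁻¹⌉₊ with hN
  -- F1 : for N ≤ i, ν i + ν D ≤ ν' i
  have qF1 : ∀ i : ℕ, N ≤ i → ν * i + ν * D ≤ ν' * i := by
    intro i hi
    have hNi : ν'⁻¹ ≤ (i : ℚ) := le_trans (Nat.le_ceil _) (by exact_mod_cast hi)
    have hB : (1 : ℚ) ≤ ν' * i := by
      have := mul_le_mul_of_nonneg_left hNi (le_of_lt hν'0)
      rwa [mul_inv_cancel₀ (ne_of_gt hν'0)] at this
    have h5 : (ν' - ν) * i = ν * D * (ν' * i) := by rw [hrel]; ring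
    have h6 : ν * (D:ℚ) * 1 ≤ ν * D * (ν' * i) :=
      mul_le_mul_of_nonneg_left hB (by positivity)
    nlinarith [h5, h6]
  -- F2 : for i < N + D, ν i < 1
  have qF2 : ∀ i : ℕ, i < N + D → ν * i < 1 := by
    intro i hi
    have h1 : (N : ℚ) < ν'⁻¹ + 1 := Nat.ceil_lt_add_one (le_of_lt hνinv)
    have h2 : ν'⁻¹ + (D : ℚ) = ν⁻¹ := by
      rw [hν']; push_cast [hD]; ring
    have h3 : (i : ℚ) ≤ (N : ℚ) + (D : ℚ) - 1 := by
      have : (i : ℚ) + 1 ≤ (N : ℚ) + D := by exact_mod_cast hi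
      linarith
    have h4 : (i : ℚ) < ν⁻¹ := by linarith
    have h5 := mul_lt_mul_of_pos_left h4 hν0
    rwa [mul_inv_cancel₀ (ne_of_gt hν0)] at h5
  -- real versions
  set νR : ℝ := (ν : ℝ) with hνR
  set ν'R : ℝ := (ν' : ℝ) with hν'R
  have hνRpos : 0 < νR := by rw [hνR]; exact_mod_cast hν0
  set δ : ℝ := 1 - νR * D with hδdef
  have hδpos : 0 < δ := by
    have : (ν : ℝ) * (D : ℝ) < 1 := by exact_mod_cast qD1
    rw [hδdef]; linarith
  have hF1R : ∀ i : ℕ, N ≤ i → νR * i + νR * D ≤ ν'R * i := by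
    intro i hi; rw [hνR, hν'R]; exact_mod_cast qF1 i hi
  have hF2R : ∀ i : ℕ, i < N + D → νR * i < 1 := by
    intro i hi; rw [hνR]; exact_mod_cast qF2 i hi
  -- the power series E^r and its properties
  set ER : PowerSeries (K₀ p k) := (ES p k E) ^ r with hERdef
  have hcoe : ER = (((E ^ r).map (ι p k) : Polynomial (K₀ p k)) : PowerSeries (K₀ p k)) := by
    rw [hERdef, ES, Polynomial.map_pow, Polynomial.coe_pow]
  have hERcoeff : ∀ m : ℕ, PowerSeries.coeff m ER = ι p k ((E ^ r).coeff m) := by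
    intro m; rw [hcoe, Polynomial.coeff_coe, Polynomial.coeff_map]
  have hERint : ∀ m : ℕ, valGE p k 0 (PowerSeries.coeff m ER) := by
    intro m; rw [hERcoeff]; exact Aux.valGE_iota p k _
  have hER1 : ∀ m : ℕ, valGE p k 1 (PowerSeries.coeff m (ER - X ^ D)) := by
    intro m
    obtain ⟨c, hc⟩ := Aux.ER_sub_coeff p k e E hE_monic hE_deg hE_coeff r m
    have h1 : PowerSeries.coeff m (ER - X ^ D) =
        ι p k ((E ^ r - Polynomial.X ^ (e * r)).coeff m) := by
      rw [map_sub, hERcoeff m, Polynomial.coeff_sub, map_sub, Polynomial.coeff_X_pow,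
        PowerSeries.coeff_X_pow, apply_ite (ι p k), map_one, map_zero, hD]
    rw [h1, hc]
    exact Aux.valGE_iota_p p k c
  -- the iteration and its estimates
  have Hn : ∀ n i : ℕ, valGE p k (n * δ - νR * i)
      (PowerSeries.coeff i (Aux.iter p k D N ER g n)) :=
    Aux.est p k D N ER g νR δ (le_of_lt hνRpos) (le_of_eq hδdef.symm) hER1 hg
  -- floor function for ksum
  set φ : ℕ → ℕ := fun n => ⌊(n : ℝ) * δ⌋₊ with hφdef
  have hφ : ∀ M : ℕ, ∃ n₀, ∀ n ≥ n₀, M ≤ φ n := by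
    intro M
    refine ⟨⌈((M : ℝ) + 1) / δ⌉₊, fun n hn => ?_⟩
    apply Nat.le_floor
    have h1 : ((M : ℝ) + 1) / δ ≤ (n : ℝ) := le_trans (Nat.le_ceil _) (by exact_mod_cast hn)
    have h2 : (M : ℝ) + 1 ≤ (n : ℝ) * δ := (div_le_iff₀ hδpos).mp h1
    linarith
  have hfloor : ∀ n : ℕ, (φ n : ℝ) ≤ (n : ℝ) * δ := fun n => Nat.floor_le (by positivity)
  -- construct x coefficients
  have hxx : ∀ i : ℕ, ∃ A : K₀ p k, valGE p k (-(νR * ((i + D : ℕ) : ℝ))) A ∧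
      ∀ M : ℕ, ∃ n₀, ∀ n ≥ n₀, valGE p k (-(νR * ((i + D : ℕ) : ℝ)) + M)
        (A - ∑ m ∈ Finset.range n,
          PowerSeries.coeff (i + D) (Aux.iter p k D N ER g m)) := by
    intro i
    apply Aux.ksum p k _ _ φ hφ
    intro n
    apply Aux.valGE_mono p k _ (Hn n (i + D))
    have := hfloor n
    linarith
  choose xA hxA1 hxA2 using hxx
  choose nx hnx using hxA2
  -- construct y coefficients
  have hyy : ∀ i : ℕ, ∃ B : K₀ p k, valGE p k (-(νR * i)) B ∧
      ∀ M : ℕ, ∃ n₀, ∀ n ≥ n₀, valGE p k (-(νR * i) + M)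
        (B - ∑ m ∈ Finset.range n,
          PowerSeries.coeff i (Aux.iter p k D N ER g m)) := by
    intro i
    apply Aux.ksum p k _ _ φ hφ
    intro n
    apply Aux.valGE_mono p k _ (Hn n i)
    have := hfloor n
    linarith
  choose yB hyB1 hyB2 using hyy
  choose ny hny using hyB2
  -- define x and y
  set x : PowerSeries (K₀ p k) := PowerSeries.mk (fun i => if N ≤ i then xA i else 0) with hxdef
  set y : PowerSeries (K₀ p k) :=
    PowerSeries.mk (fun i => if i < N + D then yB i else 0) with hydef
  refine ⟨x, y, ?_, ?_, ?_, ?_⟩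
  · -- memS ν' x
    intro i
    rw [hxdef, PowerSeries.coeff_mk]
    by_cases hi : N ≤ i
    · rw [if_pos hi]
      apply Aux.valGE_mono p k _ (hxA1 i)
      have := hF1R i hi
      push_cast
      linarith
    · rw [if_neg hi]; exact Aux.valGE_zero p k _
  · -- vanishing below 1/ν'
    intro i hi
    have h1 : (i : ℚ) < (N : ℚ) := lt_of_lt_of_le hi (Nat.le_ceil _)
    have h2 : ¬ (N ≤ i) := by exact_mod_cast not_le.mpr (by exact_mod_cast h1 : (i:ℚ) < N)
    rw [hxdef, PowerSeries.coeff_mk, if_neg (by exact_mod_cast h2)]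
  · -- memS 0 y
    intro i
    rw [hydef, PowerSeries.coeff_mk]
    by_cases hi : i < N + D
    · rw [if_pos hi]
      apply Aux.valGE_mono_ceil p k _ (hyB1 i)
      have h1 : ((-1 : ℤ) : ℝ) < -(νR * i) := by
        have := hF2R i hi
        push_cast
        linarith
      have h2 : (0 : ℤ) ≤ ⌈-(νR * (i:ℝ))⌉ := by
        have := Int.lt_ceil.mpr h1
        omega
      have h3 : -((0:ℝ) * i) = 0 := by ring
      rw [h3, Int.ceil_zero]
      exact h2
    · rw [if_neg hi]; exact Aux.valGE_zero p k _
  · -- the identity g = ER * x + y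
    ext j
    rw [map_add]
    have key : ∀ M : ℕ, valGE p k (M : ℝ)
        (PowerSeries.coeff j g -
          (PowerSeries.coeff j (ER * x) + PowerSeries.coeff j y)) := by
      intro M
      set M₁ : ℕ := M + ⌈νR * ((j + D : ℕ) : ℝ)⌉₊ with hM₁
      set n₁ : ℕ := Finset.sup (Finset.range (j + 1)) (fun a => nx a M₁) with hn₁
      set n₂ : ℕ := ny j M₁ with hn₂
      set n₃ : ℕ := ⌈((M : ℝ) + νR * j) / δ⌉₊ with hn₃
      set n : ℕ := max (max n₁ n₂) n₃ with hn
      set Xp : PowerSeries (K₀ p k) :=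
        ∑ m ∈ Finset.range n, Aux.qps p k D N (Aux.iter p k D N ER g m) with hXp
      set Yp : PowerSeries (K₀ p k) :=
        ∑ m ∈ Finset.range n, Aux.sps p k D N (Aux.iter p k D N ER g m) with hYp
      have hTele := Aux.tele p k D N ER g n
      have hkey : g - (ER * x + y) =
          ER * (Xp - x) + (Yp - y) + Aux.iter p k D N ER g n := by
        rw [hXp, hYp]
        linear_combination hTele
      have hMbound : ∀ a : ℕ, a ≤ j → (M : ℝ) ≤ -(νR * ((a + D : ℕ) : ℝ)) + M₁ := by
        intro a ha
        have h1 : νR * ((a + D : ℕ) : ℝ) ≤ νR * ((j + D : ℕ) : ℝ) := by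
          apply mul_le_mul_of_nonneg_left _ (le_of_lt hνRpos)
          exact_mod_cast Nat.add_le_add_right ha D
        have h2 : νR * ((j + D : ℕ) : ℝ) ≤ (⌈νR * ((j + D : ℕ) : ℝ)⌉₊ : ℝ) := Nat.le_ceil _
        rw [hM₁]
        push_cast at h1 h2 ⊢
        linarith
      -- piece 1
      have hXdiff : ∀ a : ℕ, a ≤ j → valGE p k (M : ℝ) (PowerSeries.coeff a (Xp - x)) := by
        intro a ha
        rw [map_sub, hXp, map_sum, hxdef, PowerSeries.coeff_mk]
        by_cases hNa : N ≤ a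
        · rw [if_pos hNa]
          have hsum : ∀ m ∈ Finset.range n,
              PowerSeries.coeff a (Aux.qps p k D N (Aux.iter p k D N ER g m)) =
              PowerSeries.coeff (a + D) (Aux.iter p k D N ER g m) := by
            intro m _
            simp [Aux.qps, hNa]
          rw [Finset.sum_congr rfl hsum]
          have hnge : n ≥ nx a M₁ := by
            have hmem : a ∈ Finset.range (j + 1) := Finset.mem_range.mpr (Nat.lt_succ_of_le ha)
            have hs : nx a M₁ ≤ n₁ := Finset.le_sup (f := fun a => nx a M₁) hmem
            calc nx a M₁ ≤ n₁ := hs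
              _ ≤ max n₁ n₂ := le_max_left _ _
              _ ≤ n := le_max_left _ _
          have htail := hnx a M₁ n hnge
          have := Aux.valGE_neg p k htail
          rw [neg_sub] at this
          exact Aux.valGE_mono p k (hMbound a ha) this
        · rw [if_neg hNa]
          have hsum : ∀ m ∈ Finset.range n,
              PowerSeries.coeff a (Aux.qps p k D N (Aux.iter p k D N ER g m)) = 0 := by
            intro m _
            simp [Aux.qps, hNa]
          rw [Finset.sum_congr rfl hsum]
          simp
          exact Aux.valGE_zero p k _
      have piece1 : valGE p k (M : ℝ) (PowerSeries.coeff j (ER * (Xp - x))) := by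
        rw [PowerSeries.coeff_mul]
        apply Aux.valGE_sum
        intro m hm
        have hm2 : m.2 ≤ j := by
          have := Finset.HasAntidiagonal.mem_antidiagonal.mp hm
          omega
        have := Aux.valGE_mul p k (hERint m.1) (hXdiff m.2 hm2)
        rw [zero_add] at this
        exact this
      -- piece 2
      have piece2 : valGE p k (M : ℝ) (PowerSeries.coeff j (Yp - y)) := by
        rw [map_sub, hYp, map_sum, hydef, PowerSeries.coeff_mk]
        by_cases hj : j < N + D
        · rw [if_pos hj]
          have hsum : ∀ m ∈ Finset.range n,
              PowerSeries.coeff j (Aux.sps p k D N (Aux.iter p k D N ER g m)) =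
              PowerSeries.coeff j (Aux.iter p k D N ER g m) := by
            intro m _
            simp [Aux.sps, hj]
          rw [Finset.sum_congr rfl hsum]
          have hnge : n ≥ n₂ := le_trans (le_max_right n₁ n₂) (le_max_left _ n₃)
          have htail := hny j M₁ n hnge
          have := Aux.valGE_neg p k htail
          rw [neg_sub] at this
          apply Aux.valGE_mono p k _ this
          have h1 : νR * (j : ℝ) ≤ νR * ((j + D : ℕ) : ℝ) := by
            apply mul_le_mul_of_nonneg_left _ (le_of_lt hνRpos)
            exact_mod_cast Nat.le_add_right j D
          have h2 : νR * ((j + D : ℕ) : ℝ) ≤ (⌈νR * ((j + D : ℕ) : ℝ)⌉₊ : ℝ) := Nat.le_ceil _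
          rw [hM₁]
          push_cast at h1 h2 ⊢
          linarith
        · rw [if_neg hj]
          have hsum : ∀ m ∈ Finset.range n,
              PowerSeries.coeff j (Aux.sps p k D N (Aux.iter p k D N ER g m)) = 0 := by
            intro m _
            simp [Aux.sps, hj]
          rw [Finset.sum_congr rfl hsum]
          simp
          exact Aux.valGE_zero p k _
      -- piece 3
      have piece3 : valGE p k (M : ℝ) (PowerSeries.coeff j (Aux.iter p k D N ER g n)) := by
        apply Aux.valGE_mono p k _ (Hn n j)
        have h1 : ((M : ℝ) + νR * j) / δ ≤ (n : ℝ) := by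
          apply le_trans (Nat.le_ceil _)
          exact_mod_cast le_trans (le_max_right (max n₁ n₂) n₃) (le_refl n)
        have h2 : (M : ℝ) + νR * j ≤ (n : ℝ) * δ := (div_le_iff₀ hδpos).mp h1
        linarith
      have := Aux.valGE_add p k (Aux.valGE_add p k piece1 piece2) piece3
      have heq : PowerSeries.coeff j g -
          (PowerSeries.coeff j (ER * x) + PowerSeries.coeff j y) =
          PowerSeries.coeff j (ER * (Xp - x)) +
          PowerSeries.coeff j (Yp - y) +
          PowerSeries.coeff j (Aux.iter p k D N ER g n) := by
        have heq2 : PowerSeries.coeff j g -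
            (PowerSeries.coeff j (ER * x) + PowerSeries.coeff j y) =
            PowerSeries.coeff j (g - (ER * x + y)) := by
          rw [map_sub, map_add]
        rw [heq2, hkey, map_add, map_add]
      rw [heq]
      exact this
    exact sub_eq_zero.mp (Aux.hausdorffK p k _ key)
end
end

section
/- The evaluation map a ↦ a_0 is a bijection from the set { a : ℕ → D | N̂(a) = 0 } onto D; that is, every w ∈ D is the constant coefficient of a unique formal power series with coefficients in D annihilated by the operator N̂ = (t+π)·d/dt ⊗ id + id ⊗ M. -/
/-- For `L` a field of characteristic zero, `π ≠ 0` in `L`, `D` an `L`-vector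
space and `M : D → D` linear, identify formal power series `Σ a_i t^i` with coefficients in
`D` with sequences `a : ℕ → D`, and let `N̂ = (t+π)·d/dt ⊗ id + id ⊗ M`, i.e.
`N̂(a)_i = i·a_i + (i+1)·π·a_{i+1} + M(a_i)`.  Then `a ↦ a_0` is a bijection from
`{a | N̂(a) = 0}` onto `D`. -/
theorem stmt9 (L : Type*) [Field L] [CharZero L] (π : L) (hπ : π ≠ 0)
    (D : Type*) [AddCommGroup D] [Module L D] (M : D →ₗ[L] D) :
    Function.Bijective
      (fun a : {b : ℕ → D // ∀ i : ℕ,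
          (i : L) • b i + (((i : L) + 1) * π) • b (i + 1) + M (b i) = 0} =>
        a.1 0) := by
  have hcoef : ∀ i : ℕ, ((i : L) + 1) * π ≠ 0 := fun i =>
    mul_ne_zero (Nat.cast_add_one_ne_zero i) hπ
  have key : ∀ (b : ℕ → D), (∀ i : ℕ,
      (i : L) • b i + (((i : L) + 1) * π) • b (i + 1) + M (b i) = 0) →
      ∀ i, b (i + 1) = (-((((i : L) + 1) * π)⁻¹)) • ((i : L) • b i + M (b i)) := by
    intro b hb i
    have h := hb i
    have : (((i : L) + 1) * π) • b (i + 1) = -((i : L) • b i + M (b i)) := by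
      rw [← sub_eq_zero]
      abel_nf
      abel_nf at h
      linear_combination (norm := abel) h
    calc b (i + 1) = ((((i : L) + 1) * π)⁻¹) • ((((i : L) + 1) * π) • b (i + 1)) :=
          (inv_smul_smul₀ (hcoef i) _).symm
      _ = ((((i : L) + 1) * π)⁻¹) • (-((i : L) • b i + M (b i))) := by rw [this]
      _ = (-((((i : L) + 1) * π)⁻¹)) • ((i : L) • b i + M (b i)) := by
          rw [smul_neg, neg_smul]
  constructor
  · rintro ⟨b, hb⟩ ⟨c, hc⟩ h
    simp only at h
    ext i
    induction i with
    | zero => exact h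
    | succ i ih =>
        have ih' : b i = c i := ih
        show b (i + 1) = c (i + 1)
        rw [key b hb i, key c hc i, ih']
  · intro w
    refine ⟨⟨fun i => Nat.rec w (fun i x =>
      (-((((i : L) + 1) * π)⁻¹)) • ((i : L) • x + M x)) i, fun i => ?_⟩, rfl⟩
    show (i : L) • _ + (((i : L) + 1) * π) • ((-((((i : L) + 1) * π)⁻¹)) • _) + _ = 0
    rw [neg_smul, smul_neg, smul_smul, mul_inv_cancel₀ (hcoef i), one_smul]
    abel
end

section
/- Let D and d be positive integers and let a₁, …, a_d be integers. Then there exists an integer t such that for every i ∈ {1, …, d}, the remainder r_i ∈ {0, 1, …, D−1} of −(t + a_i) upon division by D satisfies r_i = 0 or d·r_i ≥ D. -/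
/-- given a positive integer `D`, a positive integer `d` and integers
`a₁, …, a_d`, there is an integer `t` such that for every `i` the remainder `rᵢ` of
`-(t + aᵢ)` modulo `D` satisfies `rᵢ = 0` or `d·rᵢ ≥ D`. -/
theorem stmt14 (D d : ℕ) (hD : 0 < D) (hd : 0 < d) (a : Fin d → ℤ) :
    ∃ t : ℤ, ∀ i : Fin d,
      (-(t + a i)) % (D : ℤ) = 0 ∨ (D : ℤ) ≤ (d : ℤ) * ((-(t + a i)) % (D : ℤ)) := by
  by_contra hcon
  push_neg at hcon
  -- the set of "bad" residues
  set B : Finset ℕ := (Finset.range D).filter (fun r => 0 < r ∧ d * r < D) with hBdef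
  have hBcard : d * B.card ≤ D - 1 := by
    have hsub : B ⊆ Finset.Icc 1 ((D-1)/d) := by
      intro r hr
      simp only [hBdef, Finset.mem_filter, Finset.mem_range] at hr
      obtain ⟨-, hr1, hr2⟩ := hr
      have : r ≤ (D-1)/d := Nat.le_div_iff_mul_le hd |>.mpr (by rw [mul_comm]; omega)
      simp [Finset.mem_Icc]; omega
    have h1 : B.card ≤ (D-1)/d := by
      have := Finset.card_le_card hsub
      simpa using this
    calc d * B.card ≤ d * ((D-1)/d) := Nat.mul_le_mul_left _ h1
      _ ≤ D - 1 := Nat.mul_div_le _ _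
  -- bad t's for each i
  set T : Fin d → Finset ℕ := fun i => (Finset.range D).filter
      (fun t => (-((t : ℤ) + a i)) % (D : ℤ) ≠ 0 ∧
        (d : ℤ) * ((-((t : ℤ) + a i)) % (D : ℤ)) < D) with hTdef
  have hTcard : ∀ i, (T i).card ≤ B.card := by
    intro i
    refine Finset.card_le_card_of_injOn (fun t => ((-((t : ℤ) + a i)) % (D : ℤ)).toNat) ?_ ?_
    · intro t ht
      simp only [hTdef, Finset.mem_coe, Finset.mem_filter, Finset.mem_range] at ht
      obtain ⟨-, h1, h2⟩ := ht
      have hDz : (D : ℤ) ≠ 0 := by exact_mod_cast hD.ne'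
      have hnn : 0 ≤ (-((t : ℤ) + a i)) % (D : ℤ) := Int.emod_nonneg _ hDz
      have hlt : (-((t : ℤ) + a i)) % (D : ℤ) < D := Int.emod_lt_of_pos _ (by exact_mod_cast hD)
      simp only [hBdef, Finset.mem_coe, Finset.mem_filter, Finset.mem_range]
      refine ⟨by omega, by omega, ?_⟩
      have : (d : ℤ) * ((-((t : ℤ) + a i)) % (D : ℤ)).toNat < D := by
        rwa [Int.toNat_of_nonneg hnn]
      exact_mod_cast this
    · intro t1 ht1 t2 ht2 heq
      simp only [hTdef, Finset.coe_filter, Set.mem_setOf_eq, Finset.mem_range] at ht1 ht2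
      have hDz : (D : ℤ) ≠ 0 := by exact_mod_cast hD.ne'
      have hnn1 : 0 ≤ (-((t1 : ℤ) + a i)) % (D : ℤ) := Int.emod_nonneg _ hDz
      have hnn2 : 0 ≤ (-((t2 : ℤ) + a i)) % (D : ℤ) := Int.emod_nonneg _ hDz
      have heq' : (-((t1 : ℤ) + a i)) % (D : ℤ) = (-((t2 : ℤ) + a i)) % (D : ℤ) := by
        rw [← Int.toNat_of_nonneg hnn1, ← Int.toNat_of_nonneg hnn2]
        exact_mod_cast heq
      have hdvd : (D : ℤ) ∣ (t1 : ℤ) - t2 := by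
        have h := Int.ModEq.dvd (heq' : Int.ModEq (D : ℤ) _ _)
        have e : (-((t2 : ℤ) + a i)) - (-((t1 : ℤ) + a i)) = (t1 : ℤ) - t2 := by ring
        rwa [e] at h
      have hmod : (t1 : ℤ) % D = (t2 : ℤ) % D :=
        Int.emod_eq_emod_iff_emod_sub_eq_zero.mpr (Int.emod_eq_zero_of_dvd hdvd)
      have h1 : (t1 : ℤ) % D = t1 := Int.emod_eq_of_lt (by positivity) (by exact_mod_cast ht1.1)
      have h2 : (t2 : ℤ) % D = t2 := Int.emod_eq_of_lt (by positivity) (by exact_mod_cast ht2.1)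
      exact_mod_cast h1 ▸ h2 ▸ hmod
  -- pigeonhole
  have hcover : Finset.range D ⊆ (Finset.univ : Finset (Fin d)).biUnion T := by
    intro t ht
    obtain ⟨i, h1, h2⟩ := hcon (t : ℤ)
    simp only [Finset.mem_biUnion, Finset.mem_univ, true_and]
    exact ⟨i, by simp only [hTdef, Finset.mem_filter]; exact ⟨ht, h1, h2⟩⟩
  have hcard := Finset.card_le_card hcover
  have hbu := Finset.card_biUnion_le (s := (Finset.univ : Finset (Fin d))) (t := T)
  have hsum : ∑ i : Fin d, (T i).card ≤ d * B.card := by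
    calc ∑ i : Fin d, (T i).card ≤ ∑ _i : Fin d, B.card :=
          Finset.sum_le_sum (fun i _ => hTcard i)
      _ = d * B.card := by simp [Finset.sum_const, mul_comm]
  simp only [Finset.card_range] at hcard
  omega
end
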